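/- Suppose G has no loops and contains a clique of size k > 2, i.e., k distinct pairwise-adjacent vertices. Then for every integer j with 3 ≤ j ≤ k, the set P(S^n_{(j−2)+}) is not closed. -/

import Mathlib

open Matrix

/-- PSD matrices of rank at most `r`, indexed by a finite type. -/
def psdRank (ι : Type) [Fintype ι] [DecidableEq ι] (r : ℕ) : Set (Matrix ι ι ℝ) :=
  {X | X.PosSemidef ∧ X.rank ≤ r}

/-- Coordinate projection onto the entries indexed by `E`. -/
def proj {n : ℕ} (E : Set (Fin n × Fin n)) (X : Matrix (Fin n) (Fin n) ℝ) : E → ℝ :=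
  fun p => X p.1.1 p.1.2

/-- The simple graph underlying the index set `E` (loops discarded). -/
def graphOf {n : ℕ} (E : Set (Fin n × Fin n)) : SimpleGraph (Fin n) where
  Adj i j := i ≠ j ∧ ((i, j) ∈ E ∨ (j, i) ∈ E)
  symm := by
    constructor
    intro i j h
    exact ⟨h.1.symm, h.2.symm⟩
  loopless := by
    constructor
    intro i h
    exact h.1 rfl

/-!
Write `r = j - 2` and pick clique vertices `c₀, …, c_{r+1}`. Consider the partial matrix with
entries `-1` among `c₀, …, c_r`, entry `-1` between `c_r` and `c_{r+1}`, and `0` elsewhere.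
It is not the `E`-part of a PSD matrix `X` of rank `≤ r`: a relation `∑ g_a X_{c_a} = 0` among
the rows of `c₀, …, c_r` reads `g_a (X_{c_a c_a} + 1) = ∑ g` in column `c_a` and `g_r = 0` in
column `c_{r+1}`, which forces `g = 0`. But it is a limit of Gram matrices of vectors
`t • a_p + t⁻¹ • b_p ∈ ℝ^r` with the `a_p` pairwise orthogonal: as `t → ∞` their off-diagonal
inner products tend to `⟪a_p, b_q⟫ + ⟪b_p, a_q⟫`, while the diagonal, which `E` does not see
since it has no loops, blows up.
-/

open Filter Topology Function

theorem tendsto_dotProduct_smul_add_inv_smul {k : Type*} [Fintype k] {a b a' b' : k → ℝ}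
    (h : a ⬝ᵥ a' = 0) :
    Tendsto (fun t : ℝ => (t • a + t⁻¹ • b) ⬝ᵥ (t • a' + t⁻¹ • b')) atTop
      (𝓝 (a ⬝ᵥ b' + b ⬝ᵥ a')) := by
  have hlim : Tendsto (fun t : ℝ => a ⬝ᵥ b' + b ⬝ᵥ a' + t⁻¹ * t⁻¹ * (b ⬝ᵥ b')) atTop
      (𝓝 (a ⬝ᵥ b' + b ⬝ᵥ a')) := by
    simpa using ((tendsto_inv_atTop_zero.mul tendsto_inv_atTop_zero).mul_const (b ⬝ᵥ b')).const_add
      (a ⬝ᵥ b' + b ⬝ᵥ a')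
  refine hlim.congr' ?_
  filter_upwards [eventually_ne_atTop 0] with t ht
  simp only [add_dotProduct, dotProduct_add, smul_dotProduct, dotProduct_smul, smul_eq_mul, h,
    dotProduct_comm a b']
  field_simp
  ring

theorem self_mul_conjTranspose_mem_psdRank {ι : Type} [Fintype ι] [DecidableEq ι] {r : ℕ}
    (A : Matrix ι (Fin r) ℝ) : A * Aᴴ ∈ psdRank ι r :=
  ⟨posSemidef_self_mul_conjTranspose A, (rank_self_mul_conjTranspose A).trans_le
    (A.rank_le_card_width.trans_eq (Fintype.card_fin r))⟩

theorem proj_mem_closure_image_psdRank {n r : ℕ} {E : Set (Fin n × Fin n)} (hE : ∀ v, (v, v) ∉ E)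
    {α β : Fin n → Fin r → ℝ} (hα : Pairwise fun u v => α u ⬝ᵥ α v = 0) :
    proj E (of fun u v => α u ⬝ᵥ β v + β u ⬝ᵥ α v) ∈ closure (proj E '' psdRank (Fin n) r) := by
  let A : ℝ → Matrix (Fin n) (Fin r) ℝ := fun t => of fun u => t • α u + t⁻¹ • β u
  refine mem_closure_of_tendsto (f := fun t => proj E (A t * (A t)ᴴ)) (b := atTop) ?_
    (Eventually.of_forall fun t => Set.mem_image_of_mem _ (self_mul_conjTranspose_mem_psdRank _))
  refine tendsto_pi_nhds.2 fun ⟨(u, v), huv⟩ => ?_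
  have hne : u ≠ v := by rintro rfl; exact hE u huv
  exact tendsto_dotProduct_smul_add_inv_smul (hα hne)

theorem exists_row_relation_of_rank_le {ι : Type*} [Fintype ι] {r : ℕ} {X : Matrix ι ι ℝ}
    (hX : X.rank ≤ r) (v : Fin (r + 1) → ι) :
    ∃ g : Fin (r + 1) → ℝ, g ≠ 0 ∧ ∀ u, ∑ b, g b * X (v b) u = 0 := by
  have hdep : ¬ LinearIndependent ℝ (X.submatrix v id).row := fun hli => by
    have := (rank_submatrix_le X v id).trans hX
    rw [hli.rank_matrix, Fintype.card_fin] at this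
    omega
  obtain ⟨g, hg, b, hb⟩ := Fintype.not_linearIndependent_iff.mp hdep
  exact ⟨g, fun h => hb (congrFun h b), fun u => by simpa using congrFun hg u⟩

theorem lt_rank_of_apply_eq_neg_one {ι : Type*} [Fintype ι] {r : ℕ} {X : Matrix ι ι ℝ}
    (v : Fin (r + 1) → ι) (w : ι) (hdiag : ∀ a, 0 ≤ X (v a) (v a))
    (hv : ∀ a b, a ≠ b → X (v a) (v b) = -1)
    (hw : ∀ a, X (v a) w = if a = Fin.last r then -1 else 0) : r < X.rank := by
  by_contra! hX
  obtain ⟨g, hg, hrel⟩ := exists_row_relation_of_rank_le hX v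
  have hrow : ∀ a, g a * (X (v a) (v a) + 1) = ∑ b, g b := fun a => by
    have h := hrel (v a)
    rw [← Finset.add_sum_erase _ _ (Finset.mem_univ a),
      Finset.sum_congr rfl fun b hb => by rw [hv b a (Finset.ne_of_mem_erase hb)]] at h
    rw [← Finset.add_sum_erase _ _ (Finset.mem_univ a)]
    simp only [mul_neg_one, Finset.sum_neg_distrib] at h
    linarith
  have hlast : g (Fin.last r) = 0 := by
    simpa [hw] using hrel w
  have hsum : ∑ b, g b = 0 := by rw [← hrow (Fin.last r), hlast, zero_mul]
  refine hg (funext fun a => ?_)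
  have := hrow a
  rw [hsum, mul_eq_zero] at this
  exact this.resolve_right (by linarith [hdiag a])

theorem apply_eq_of_proj_eq {n : ℕ} {E : Set (Fin n × Fin n)} {X Y : Matrix (Fin n) (Fin n) ℝ}
    (hX : X.IsHermitian) (hY : Y.IsHermitian) (h : proj E X = proj E Y) {u v : Fin n}
    (huv : (u, v) ∈ E ∨ (v, u) ∈ E) : X u v = Y u v := by
  rcases huv with huv | huv
  · exact congrFun h ⟨_, huv⟩
  · rw [← hX.apply, ← hY.apply]
    exact congrArg star (congrFun h ⟨_, huv⟩)

theorem pairwise_extend_dotProduct_eq_zero {κ ι k : Type*} [Fintype k] {c : κ → ι}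
    (hc : Injective c) {f : κ → k → ℝ} (hf : Pairwise fun p q => f p ⬝ᵥ f q = 0) :
    Pairwise fun u v => extend c f 0 u ⬝ᵥ extend c f 0 v = 0 := by
  intro u v huv
  by_cases hu : ∃ p, c p = u
  · by_cases hv : ∃ q, c q = v
    · obtain ⟨p, rfl⟩ := hu
      obtain ⟨q, rfl⟩ := hv
      rw [hc.extend_apply, hc.extend_apply]
      exact hf fun h => huv (congrArg c h)
    · rw [extend_apply' _ _ _ hv, Pi.zero_apply, dotProduct_zero]
  · rw [extend_apply' _ _ _ hu, Pi.zero_apply, zero_dotProduct]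

-- For `p ≤ m + 1` these are `e_{p-1}` and `-∑_{i ≥ p} e_i`, whose cross terms are all `-1`;
-- index `m + 2` is the extra vertex, with vector `-t⁻¹ e_m`.
def leadVec (m p : ℕ) : Fin (m + 1) → ℝ :=
  fun i => if (i : ℕ) + 1 = p then 1 else 0

def tailVec (m p : ℕ) : Fin (m + 1) → ℝ :=
  fun i => if p = m + 2 then (if (i : ℕ) = m then -1 else 0) else if p ≤ i then -1 else 0

theorem leadVec_dotProduct_leadVec {m p q : ℕ} (h : p ≠ q) : leadVec m p ⬝ᵥ leadVec m q = 0 :=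
  Finset.sum_eq_zero fun i _ => by
    simp only [leadVec]
    split_ifs <;> first | omega | simp

theorem leadVec_dotProduct_tailVec_add {m p q : ℕ} (hpq : p ≠ q) (hp : p ≤ m + 1)
    (hq : q ≤ m + 1) : leadVec m p ⬝ᵥ tailVec m q + tailVec m p ⬝ᵥ leadVec m q = -1 := by
  simp only [dotProduct, ← Finset.sum_add_distrib]
  rw [Fintype.sum_eq_single ⟨max p q - 1, by omega⟩]
  · simp only [leadVec, tailVec]
    split_ifs <;> first | omega | simp
  · intro i hi
    have hi' : (i : ℕ) ≠ max p q - 1 := fun h => hi (Fin.ext h)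
    simp only [leadVec, tailVec]
    split_ifs <;> first | omega | simp

theorem leadVec_dotProduct_tailVec_add_last {m p : ℕ} (hp : p ≤ m + 1) :
    leadVec m p ⬝ᵥ tailVec m (m + 2) + tailVec m p ⬝ᵥ leadVec m (m + 2) =
      if p = m + 1 then -1 else 0 := by
  simp only [dotProduct, ← Finset.sum_add_distrib]
  rw [Fintype.sum_eq_single (Fin.last m)]
  · simp only [leadVec, tailVec, Fin.val_last]
    split_ifs <;> first | omega | simp
  · intro i hi
    have hi' : (i : ℕ) ≠ m := fun h => hi (Fin.ext h)
    simp only [leadVec, tailVec]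
    split_ifs <;> first | omega | simp

theorem stmt18_general (n : ℕ) (E : Set (Fin n × Fin n))
    (hloop : ∀ v : Fin n, (v, v) ∉ E)
    (k : ℕ) (S : Finset (Fin n)) (hcard : S.card = k)
    (hclique : ∀ u ∈ S, ∀ v ∈ S, u ≠ v → ((u, v) ∈ E ∨ (v, u) ∈ E))
    (j : ℕ) (hj3 : 3 ≤ j) (hjk : j ≤ k) :
    ¬ IsClosed (proj E '' psdRank (Fin n) (j - 2)) := by
  obtain ⟨m, rfl⟩ : ∃ m, j = m + 3 := ⟨j - 3, by omega⟩
  have hle : m + 3 ≤ S.card := hcard ▸ hjk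
  obtain ⟨c, hc, hcS⟩ : ∃ c : Fin (m + 3) → Fin n, Injective c ∧ ∀ p, c p ∈ S :=
    ⟨fun p => S.equivFin.symm (Fin.castLE hle p),
      Subtype.val_injective.comp (S.equivFin.symm.injective.comp (Fin.castLE_injective hle)),
      fun p => (S.equivFin.symm _).2⟩
  set α := extend c (fun p : Fin (m + 3) => leadVec m p) 0
  set β := extend c (fun p : Fin (m + 3) => tailVec m p) 0
  set Y : Matrix (Fin n) (Fin n) ℝ := of fun u v => α u ⬝ᵥ β v + β u ⬝ᵥ α v
  have hα : Pairwise fun u v => α u ⬝ᵥ α v = 0 := pairwise_extend_dotProduct_eq_zero hc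
    fun p q hpq => leadVec_dotProduct_leadVec (Fin.val_ne_of_ne hpq)
  intro hclosed
  obtain ⟨X, ⟨hpsd, hrank⟩, hXY⟩ :=
    hclosed.closure_subset (proj_mem_closure_image_psdRank hloop hα)
  have hY : Y.IsHermitian := IsHermitian.ext fun u v => by simp [Y, dotProduct_comm, add_comm]
  have hXc : ∀ p q, p ≠ q →
      X (c p) (c q) = leadVec m p ⬝ᵥ tailVec m q + tailVec m p ⬝ᵥ leadVec m q := fun p q hpq => by
    rw [apply_eq_of_proj_eq hpsd.isHermitian hY hXY (hclique _ (hcS p) _ (hcS q) (hc.ne hpq))]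
    simp [Y, α, β, hc.extend_apply]
  refine (lt_rank_of_apply_eq_neg_one (fun a => c a.castSucc) (c (Fin.last _))
    (fun a => hpsd.diag_nonneg) (fun a b hab => ?_) (fun a => ?_)).not_ge hrank
  · have hab' := (Fin.castSucc_injective _).ne hab
    rw [hXc _ _ hab']
    exact leadVec_dotProduct_tailVec_add (Fin.val_ne_of_ne hab') (Nat.lt_succ_iff.mp a.is_lt)
      (Nat.lt_succ_iff.mp b.is_lt)
  · rw [hXc _ _ (Fin.castSucc_ne_last a)]
    simpa [Fin.ext_iff] using
      leadVec_dotProduct_tailVec_add_last (m := m) (p := a) (Nat.lt_succ_iff.mp a.is_lt)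

/-- If `G` has no loops and contains a clique of size `k > 2`,
then for every integer `j` with `3 ≤ j ≤ k` the set `P(Sⁿ₍ⱼ₋₂₎₊)` is not
closed. -/
theorem stmt18 (n : ℕ) (hn : 2 ≤ n) (E : Set (Fin n × Fin n))
    (hup : ∀ p ∈ E, p.1 ≤ p.2)
    (hloop : ∀ v : Fin n, (v, v) ∉ E)
    (k : ℕ) (hk : 2 < k) (S : Finset (Fin n)) (hcard : S.card = k)
    (hclique : ∀ u ∈ S, ∀ v ∈ S, u ≠ v → ((u, v) ∈ E ∨ (v, u) ∈ E))
    (j : ℕ) (hj3 : 3 ≤ j) (hjk : j ≤ k) :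
    ¬ IsClosed (proj E '' psdRank (Fin n) (j - 2)) :=
  stmt18_general n E hloop k S hcard hclique j hj3 hjk
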